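/- Let A, B be n×n complex positive semidefinite matrices. Then ‖A^{1/2} − B^{1/2}‖₂² ≤ ‖A − B‖₁, where ‖·‖₂ is the Hilbert–Schmidt (Frobenius) norm and ‖·‖₁ the trace norm (Powers–Størmer inequality). -/

import Mathlib

open scoped Classical ComplexOrder Matrix

/-- The positive semidefinite square root of a positive semidefinite matrix
(junk value `0` if the matrix is not positive semidefinite). -/
noncomputable def msqrt {n : Type*} [Fintype n] [DecidableEq n]
    (A : Matrix n n ℂ) : Matrix n n ℂ :=
  if h : A.PosSemidef then
    (h.1.eigenvectorUnitary : Matrix n n ℂ) *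
      Matrix.diagonal ((↑) ∘ Real.sqrt ∘ h.1.eigenvalues) *
      (star h.1.eigenvectorUnitary : Matrix n n ℂ)
  else 0

/-- The Hilbert-Schmidt (Frobenius) norm of a matrix. -/
noncomputable def frob {n : Type*} [Fintype n]
    (M : Matrix n n ℂ) : ℝ :=
  Real.sqrt (∑ i, ∑ j, ‖M i j‖ ^ 2)

/-- `η(A,B) = ‖√(1−A)·√B − √A·√(1−B)‖₂`. -/
noncomputable def eta {n : Type*} [Fintype n] [DecidableEq n]
    (A B : Matrix n n ℂ) : ℝ :=
  frob (msqrt (1 - A) * msqrt B - msqrt A * msqrt (1 - B))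

/-- The trace norm `‖M‖₁ = tr √(M†M)` of a matrix. -/
noncomputable def traceNorm {n : Type*} [Fintype n] [DecidableEq n]
    (M : Matrix n n ℂ) : ℝ :=
  (msqrt (Mᴴ * M)).trace.re

section Aux

open Matrix

variable {m : Type*} [Fintype m] [DecidableEq m]

lemma ps_diag_nonneg' {M : Matrix m m ℂ} (h : M.PosSemidef) (i : m) :
    0 ≤ (M i i).re ∧ (M i i).im = 0 := by
  have := h.dotProduct_mulVec_nonneg (Pi.single i 1)
  simp [dotProduct, Matrix.mulVec, Pi.single_apply] at this
  rw [Complex.le_def] at this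
  exact ⟨this.1, this.2.symm⟩

lemma ps_conj_diag_nonneg {M : Matrix m m ℂ} (h : M.PosSemidef)
    (U : Matrix m m ℂ) (i : m) : 0 ≤ ((Uᴴ * M * U) i i).re :=
  (ps_diag_nonneg' (h.conjTranspose_mul_mul_same U) i).1

lemma ps_conj_diag_im {M : Matrix m m ℂ} (h : M.PosSemidef)
    (U : Matrix m m ℂ) (i : m) : ((Uᴴ * M * U) i i).im = 0 :=
  (ps_diag_nonneg' (h.conjTranspose_mul_mul_same U) i).2

lemma unitary_conj_mul {U : Matrix m m ℂ} (hU : U * Uᴴ = 1)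
    (X Y : Matrix m m ℂ) : Uᴴ * (X * Y) * U = (Uᴴ * X * U) * (Uᴴ * Y * U) := by
  have : (Uᴴ * X * U) * (Uᴴ * Y * U) = Uᴴ * (X * (U * Uᴴ) * Y) * U := by
    noncomm_ring
  rw [this, hU, mul_one]

lemma sandwich_mul {V : Matrix m m ℂ} (hV : Vᴴ * V = 1) (f g : m → ℝ) :
    (V * diagonal (fun i => ((f i : ℝ) : ℂ)) * Vᴴ) *
      (V * diagonal (fun i => ((g i : ℝ) : ℂ)) * Vᴴ)
      = V * diagonal (fun i => ((f i * g i : ℝ) : ℂ)) * Vᴴ := by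
  have h1 : (V * diagonal (fun i => ((f i : ℝ) : ℂ)) * Vᴴ) *
      (V * diagonal (fun i => ((g i : ℝ) : ℂ)) * Vᴴ)
      = V * (diagonal (fun i => ((f i : ℝ) : ℂ)) * (Vᴴ * V) *
        diagonal (fun i => ((g i : ℝ) : ℂ))) * Vᴴ := by noncomm_ring
  rw [h1, hV, mul_one, diagonal_mul_diagonal]
  push_cast
  rfl

lemma sandwich_psd (V : Matrix m m ℂ) {f : m → ℝ} (hf : ∀ i, 0 ≤ f i) :
    (V * diagonal (fun i => ((f i : ℝ) : ℂ)) * Vᴴ).PosSemidef := by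
  have hd : (diagonal (fun i => ((f i : ℝ) : ℂ))).PosSemidef :=
    PosSemidef.diagonal fun i => by
      rw [Complex.le_def]; simp [hf i]
  exact hd.mul_mul_conjTranspose_same V

lemma sandwich_sub (V : Matrix m m ℂ) (f g : m → ℝ) :
    (V * diagonal (fun i => ((f i : ℝ) : ℂ)) * Vᴴ) -
      (V * diagonal (fun i => ((g i : ℝ) : ℂ)) * Vᴴ)
      = V * diagonal (fun i => ((f i - g i : ℝ) : ℂ)) * Vᴴ := by
  have : diagonal (fun i => ((f i - g i : ℝ) : ℂ))
      = diagonal (fun i => ((f i : ℝ) : ℂ)) - diagonal (fun i => ((g i : ℝ) : ℂ)) := by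
    rw [Matrix.diagonal_sub]; push_cast; rfl
  rw [this]; noncomm_ring

lemma sandwich_add (V : Matrix m m ℂ) (f g : m → ℝ) :
    (V * diagonal (fun i => ((f i : ℝ) : ℂ)) * Vᴴ) +
      (V * diagonal (fun i => ((g i : ℝ) : ℂ)) * Vᴴ)
      = V * diagonal (fun i => ((f i + g i : ℝ) : ℂ)) * Vᴴ := by
  have : diagonal (fun i => ((f i + g i : ℝ) : ℂ))
      = diagonal (fun i => ((f i : ℝ) : ℂ)) + diagonal (fun i => ((g i : ℝ) : ℂ)) := by
    rw [Matrix.diagonal_add]; push_cast; rfl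
  rw [this]; noncomm_ring

open scoped MatrixOrder in
lemma msqrt_eq_cfc {A : Matrix m m ℂ} (hA : A.PosSemidef) : msqrt A = CFC.sqrt A := by
  rw [msqrt, dif_pos hA, CFC.sqrt_eq_cfc, cfc_nnreal_eq_real _ A, hA.1.cfc_eq, IsHermitian.cfc,
    Unitary.conjStarAlgAut_apply]
  congr 3
  funext i
  simp [Real.coe_toNNReal', max_eq_left (hA.eigenvalues_nonneg i)]

open scoped MatrixOrder in
lemma msqrt_psd {A : Matrix m m ℂ} (hA : A.PosSemidef) : (msqrt A).PosSemidef := by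
  rw [msqrt_eq_cfc hA]; exact (CFC.sqrt_nonneg A).posSemidef

open scoped MatrixOrder in
lemma msqrt_mul_self {A : Matrix m m ℂ} (hA : A.PosSemidef) : msqrt A * msqrt A = A := by
  rw [msqrt_eq_cfc hA]; exact CFC.sqrt_mul_sqrt_self A hA.nonneg

open scoped MatrixOrder in
lemma msqrt_eq_of_sq {N M : Matrix m m ℂ} (hN : N.PosSemidef) (hM : M.PosSemidef)
    (h : N ^ 2 = M) : msqrt M = N := by
  rw [msqrt_eq_cfc hM, CFC.sqrt_eq_iff M N hM.nonneg hN.nonneg, ← pow_two, h]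

lemma trace_unitary_conj {U : Matrix m m ℂ} (hU : U * Uᴴ = 1)
    (M : Matrix m m ℂ) : (Uᴴ * M * U).trace = M.trace := by
  rw [Matrix.trace_mul_cycle, hU, one_mul]

end Aux

open Matrix
theorem powers_stormer {n : ℕ}
    (A B : Matrix (Fin n) (Fin n) ℂ)
    (hA : A.PosSemidef) (hB : B.PosSemidef) :
    frob (msqrt A - msqrt B) ^ 2 ≤ traceNorm (A - B) := by
  have hSA := msqrt_psd hA
  have hSB := msqrt_psd hB
  set SA := msqrt A with hSAdef
  set SB := msqrt B with hSBdef
  set P := SA - SB with hPdef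
  set Q := SA + SB with hQdef
  set C := A - B with hCdef
  have hPh : P.IsHermitian := hSA.1.sub hSB.1
  have hCh : C.IsHermitian := hA.1.sub hB.1
  set U : Matrix (Fin n) (Fin n) ℂ := (hPh.eigenvectorUnitary : Matrix (Fin n) (Fin n) ℂ) with hUdef
  set lam := hPh.eigenvalues with hlamdef
  have hU1 : Uᴴ * U = 1 := by
    rw [← star_eq_conjTranspose]; exact Unitary.coe_star_mul_self _
  have hU2 : U * Uᴴ = 1 := by
    rw [← star_eq_conjTranspose]; exact Unitary.coe_mul_star_self _
  have hdiag : Uᴴ * P * U = diagonal (fun i => ((lam i : ℝ) : ℂ)) := by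
    have := hPh.conjStarAlgAut_star_eigenvectorUnitary
    rw [Unitary.conjStarAlgAut_apply, Unitary.coe_star, star_star] at this
    rw [← star_eq_conjTranspose]; exact this
  have hspecP : P = U * diagonal (fun i => ((lam i : ℝ) : ℂ)) * Uᴴ := by
    have := hPh.spectral_theorem
    rw [Unitary.conjStarAlgAut_apply] at this
    rw [← star_eq_conjTranspose]; exact this
  -- key algebraic identity
  have key : P * Q + Q * P = C + C := by
    have ha : SA * SA = A := msqrt_mul_self hA
    have hb : SB * SB = B := msqrt_mul_self hB
    rw [hPdef, hQdef, hCdef, ← ha, ← hb]; noncomm_ring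
  set C' := Uᴴ * C * U with hC'def
  set Q' := Uᴴ * Q * U with hQ'def
  -- diagonal of Q' dominates |lam|
  have hQmP : (Q - P).PosSemidef := by
    have h9 : Q - P = SB + SB := by rw [hQdef, hPdef]; abel
    rw [h9]; exact hSB.add hSB
  have hQpP : (Q + P).PosSemidef := by
    have h9 : Q + P = SA + SA := by rw [hQdef, hPdef]; abel
    rw [h9]; exact hSA.add hSA
  have hq : ∀ i, |lam i| ≤ (Q' i i).re := by
    intro i
    have h1 := ps_conj_diag_nonneg hQmP U i
    have h2 := ps_conj_diag_nonneg hQpP U i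
    have e1 : Uᴴ * (Q - P) * U = Q' - diagonal (fun i => ((lam i : ℝ) : ℂ)) := by
      rw [Matrix.mul_sub, Matrix.sub_mul, hdiag, hQ'def]
    have e2 : Uᴴ * (Q + P) * U = Q' + diagonal (fun i => ((lam i : ℝ) : ℂ)) := by
      rw [Matrix.mul_add, Matrix.add_mul, hdiag, hQ'def]
    rw [e1] at h1; rw [e2] at h2
    simp only [Matrix.sub_apply, Matrix.add_apply, Matrix.diagonal_apply_eq,
      Complex.sub_re, Complex.add_re, Complex.ofReal_re] at h1 h2
    rw [abs_le]; constructor <;> linarith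
  -- diagonal of C'
  have hc : ∀ i, C' i i = (lam i : ℂ) * Q' i i := by
    intro i
    have e : C' + C' = diagonal (fun i => ((lam i : ℝ) : ℂ)) * Q' +
        Q' * diagonal (fun i => ((lam i : ℝ) : ℂ)) := by
      have h3 : Uᴴ * (C + C) * U = C' + C' := by
        rw [hC'def]; noncomm_ring
      calc C' + C' = Uᴴ * (P * Q + Q * P) * U := by rw [key, h3]
        _ = (Uᴴ * P * U) * (Uᴴ * Q * U) + (Uᴴ * Q * U) * (Uᴴ * P * U) := by
            rw [Matrix.mul_add, Matrix.add_mul, unitary_conj_mul hU2 P Q,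
              unitary_conj_mul hU2 Q P]
        _ = _ := by rw [hdiag, hQ'def]
    have e2 : (C' + C') i i = (diagonal (fun i => ((lam i : ℝ) : ℂ)) * Q' +
        Q' * diagonal (fun i => ((lam i : ℝ) : ℂ))) i i := by rw [e]
    simp only [Matrix.add_apply, Matrix.diagonal_mul, Matrix.mul_diagonal] at e2
    have : (2 : ℂ) * C' i i = (2 : ℂ) * ((lam i : ℂ) * Q' i i) := by
      rw [two_mul, two_mul, e2]; ring
    exact mul_left_cancel₀ two_ne_zero this
  -- spectral decomposition of C, construction of |C|
  set V : Matrix (Fin n) (Fin n) ℂ := (hCh.eigenvectorUnitary : Matrix (Fin n) (Fin n) ℂ) with hVdef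
  set mu := hCh.eigenvalues with hmudef
  have hV1 : Vᴴ * V = 1 := by
    rw [← star_eq_conjTranspose]; exact Unitary.coe_star_mul_self _
  have hspecC : C = V * diagonal (fun i => ((mu i : ℝ) : ℂ)) * Vᴴ := by
    have := hCh.spectral_theorem
    rw [Unitary.conjStarAlgAut_apply] at this
    rw [← star_eq_conjTranspose]; exact this
  set N := V * diagonal (fun i => ((|mu i| : ℝ) : ℂ)) * Vᴴ with hNdef
  have hNpsd : N.PosSemidef := sandwich_psd V fun i => abs_nonneg _
  have hCC : (Cᴴ * C).PosSemidef := posSemidef_conjTranspose_mul_self C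
  have hNsq : N ^ 2 = Cᴴ * C := by
    rw [pow_two, hCh.eq, hNdef]
    conv_rhs => rw [hspecC]
    rw [sandwich_mul hV1, sandwich_mul hV1]
    simp only [abs_mul_abs_self]
  have hMN : msqrt (Cᴴ * C) = N := by
    exact msqrt_eq_of_sq hNpsd hCC hNsq
  have hNmC : (N - C).PosSemidef := by
    have h9 : N - C = V * diagonal (fun i => ((|mu i| - mu i : ℝ) : ℂ)) * Vᴴ := by
      conv_lhs => rw [hNdef, hspecC]
      exact sandwich_sub V _ _
    rw [h9]
    exact sandwich_psd V fun i => by simp [le_abs_self]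
  have hNpC : (N + C).PosSemidef := by
    have h9 : N + C = V * diagonal (fun i => ((|mu i| + mu i : ℝ) : ℂ)) * Vᴴ := by
      conv_lhs => rw [hNdef, hspecC]
      exact sandwich_add V _ _
    rw [h9]
    exact sandwich_psd V fun i => by
      have := neg_abs_le (mu i); linarith
  set N' := Uᴴ * N * U with hN'def
  have hb2 : ∀ i, |(C' i i).re| ≤ (N' i i).re := by
    intro i
    have h1 := ps_conj_diag_nonneg hNmC U i
    have h2 := ps_conj_diag_nonneg hNpC U i
    have e1 : Uᴴ * (N - C) * U = N' - C' := by
      rw [Matrix.mul_sub, Matrix.sub_mul, hN'def, hC'def]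
    have e2 : Uᴴ * (N + C) * U = N' + C' := by
      rw [Matrix.mul_add, Matrix.add_mul, hN'def, hC'def]
    rw [e1] at h1; rw [e2] at h2
    simp only [Matrix.sub_apply, Matrix.add_apply, Complex.sub_re, Complex.add_re] at h1 h2
    rw [abs_le]; constructor <;> linarith
  -- trace computations
  have htr : traceNorm C = ∑ i, (N' i i).re := by
    have h9 : N'.trace = N.trace := trace_unitary_conj hU2 N
    rw [traceNorm, hMN, ← h9, Matrix.trace]
    simp [Matrix.diag, Complex.re_sum]
  -- Frobenius norm computation
  have hfr : frob P ^ 2 = ∑ i, lam i ^ 2 := by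
    have h0 : frob P ^ 2 = ∑ i, ∑ j, ‖P i j‖ ^ 2 := by
      rw [frob, Real.sq_sqrt]
      positivity
    have hpt : ∀ z : ℂ, (star z * z).re = ‖z‖ ^ 2 := by
      intro z
      rw [Complex.sq_norm, Complex.normSq_apply]
      simp [Complex.mul_re]
    have h1 : ∑ i, ∑ j, ‖P i j‖ ^ 2 = ((Pᴴ * P).trace).re := by
      rw [Matrix.trace]
      simp only [Matrix.diag, Matrix.mul_apply, Matrix.conjTranspose_apply,
        Complex.re_sum]
      simp only [hpt]
      rw [Finset.sum_comm]
    have h2 : (Pᴴ * P).trace = ∑ i, ((lam i : ℂ)) ^ 2 := by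
      rw [hPh.eq]
      conv_lhs => rw [hspecP]
      rw [sandwich_mul hU1, trace_mul_cycle, hU1, one_mul, Matrix.trace_diagonal]
      congr 1; funext i
      push_cast
      ring
    rw [h0, h1, h2, Complex.re_sum]
    congr 1; funext i
    rw [← Complex.ofReal_pow, Complex.ofReal_re]
  -- final chain
  rw [hfr, htr]
  apply Finset.sum_le_sum
  intro i _
  have hqi := hq i
  have hci : (C' i i).re = lam i * (Q' i i).re := by
    rw [hc i]
    simp [Complex.mul_re]
  have habs : |(C' i i).re| = |lam i| * (Q' i i).re := by
    rw [hci, abs_mul, abs_of_nonneg (le_trans (abs_nonneg _) hqi)]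
  have h1 : lam i ^ 2 ≤ |(C' i i).re| := by
    rw [habs, pow_two, ← abs_mul_abs_self]
    exact mul_le_mul_of_nonneg_left hqi (abs_nonneg _)
  exact le_trans h1 (hb2 i)
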